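/- arXiv:1312.2200 — 5 statements merged into one kernel-verified Lean document; each statement's English description precedes it below -/
import Mathlib

section
/- For all m, n ∈ ℕ, the EPOSIC channel Φ_{m,n,0} (with h = 0, so r = m+n) maps the pure state f_0 f_0* (where f_0 is the 0-th standard basis vector of ℂ^{r+1}) to the pure state e_0 e_0* (e_0 the 0-th standard basis vector of ℂ^{m+1}); consequently S_min(Φ_{m,n,0}) = 0. -/
open scoped BigOperators Matrix
open Matrix

/-- Binomial coefficient `C(a, b)` with an integer lower argument (zero if `b < 0`),
as a real number. -/
noncomputable def Cb (a : ℕ) (b : ℤ) : ℝ :=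
  if 0 ≤ b then (a.choose b.toNat : ℝ) else 0

/-- The coefficient `β_{i,s,j}` of the EPOSIC channel `Φ_{m,n,h}`. -/
noncomputable def epsBeta (m n h : ℕ) (i s j : ℤ) : ℝ :=
  ((-1 : ℝ) ^ s * Cb h s * Cb (n - h) (j - s) * Cb (m - h) (i - j + s)) /
    Real.sqrt (Cb (m + n - 2 * h) i * Cb m (i - j + h) * Cb n j *
      ∑ k ∈ Finset.range (h + 1),
        (h.choose k : ℝ) ^ 2 / ((m.choose (h - k) : ℝ) * (n.choose k : ℝ)))

/-- The coefficient `ε_i^j = ε_i^j(m,n,h)` of the EPOSIC channel `Φ_{m,n,h}`. -/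
noncomputable def eps (m n h : ℕ) (i j : ℤ) : ℝ :=
  ∑ s ∈ Finset.Icc (max 0 (max (j - i) (j + h - n)))
      (min (h : ℤ) (min j (j + m - i - h))),
    epsBeta m n h i s j

/-- The `j`-th EPOSIC Kraus operator of `Φ_{m,n,h}`: the `(m+1) × (r+1)` matrix
(`r = m + n - 2h`) whose `(i - j + h, i)` entry is `ε_i^j` for
`max{0, j-h} ≤ i ≤ min{r, m-h+j}`, all other entries being `0`. -/
noncomputable def kraus (m n h j : ℕ) : Matrix (Fin (m + 1)) (Fin (m + n - 2 * h + 1)) ℂ :=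
  Matrix.of fun l i =>
    if (l : ℤ) = (i : ℤ) - j + h ∧ max 0 ((j : ℤ) - h) ≤ (i : ℤ) ∧
        (i : ℤ) ≤ min ((m : ℤ) + n - 2 * h) ((m : ℤ) - h + j)
      then ((eps m n h i j : ℝ) : ℂ) else 0

/-- The EPOSIC channel `Φ_{m,n,h}`. -/
noncomputable def eposic (m n h : ℕ)
    (A : Matrix (Fin (m + n - 2 * h + 1)) (Fin (m + n - 2 * h + 1)) ℂ) :
    Matrix (Fin (m + 1)) (Fin (m + 1)) ℂ :=
  ∑ j ∈ Finset.range (n + 1), kraus m n h j * A * (kraus m n h j)ᴴ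

/-- The pure state `w w*` associated to a vector `w`. -/
noncomputable def pureState {d : ℕ} (w : EuclideanSpace ℂ (Fin d)) :
    Matrix (Fin d) (Fin d) ℂ :=
  Matrix.of fun i j => w i * (starRingEnd ℂ) (w j)

open scoped Classical in
/-- The von Neumann entropy (base-2) of a matrix: `-∑ λᵢ log₂ λᵢ` over its eigenvalues
if it is Hermitian, and `0` otherwise.  (Note `Real.logb 2 0 = 0`, giving the
convention `0 · log₂ 0 = 0`.) -/
noncomputable def entropy {d : ℕ} (ρ : Matrix (Fin d) (Fin d) ℂ) : ℝ :=
  if h : ρ.IsHermitian then -∑ i, h.eigenvalues i * Real.logb 2 (h.eigenvalues i) else 0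

/-- The minimal output entropy of a channel: the infimum of the entropies of the outputs
of pure-state inputs. -/
noncomputable def Smin {d e : ℕ}
    (Φ : Matrix (Fin d) (Fin d) ℂ → Matrix (Fin e) (Fin e) ℂ) : ℝ :=
  sInf {x | ∃ w : EuclideanSpace ℂ (Fin d), ‖w‖ = 1 ∧ x = entropy (Φ (pureState w))}

/-!
At `h = 0` the sum defining `ε_i^j` has the single term `s = 0`, so
`(ε_i^j)² = C(n,j) C(m,i-j) / C(m+n,i)` and `T_j` is the shift `f_i ↦ ε_i^j e_{i-j}`.
Hence `T_j f_0 = 0` for `j > 0` and `T_0 f_0 = e_0`, which gives the pure output. For the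
entropy, `Σ_j T_j* T_j` is diagonal with entries `Σ_j C(n,j) C(m,i-j) / C(m+n,i) = 1`
(Vandermonde), so the channel maps pure states to states, whose entropy is nonnegative;
the value `0` is attained at `f_0`.
-/

open scoped ComplexOrder

section QuantumState

variable {d : ℕ}

lemma pureState_eq_vecMulVec (w : EuclideanSpace ℂ (Fin d)) :
    pureState w = vecMulVec w (star w) := rfl

lemma dotProduct_star_self_eq_one {w : EuclideanSpace ℂ (Fin d)} (hw : ‖w‖ = 1) :
    star ⇑w ⬝ᵥ ⇑w = 1 := by
  have := EuclideanSpace.inner_eq_star_dotProduct w w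
  rw [inner_self_eq_norm_sq_to_K, hw] at this
  simpa [dotProduct_comm] using this.symm

lemma pureState_posSemidef (w : EuclideanSpace ℂ (Fin d)) : (pureState w).PosSemidef :=
  posSemidef_vecMulVec_self_star _

lemma trace_pureState {w : EuclideanSpace ℂ (Fin d)} (hw : ‖w‖ = 1) :
    (pureState w).trace = 1 := by
  rw [pureState_eq_vecMulVec, trace_vecMulVec, dotProduct_comm,
    dotProduct_star_self_eq_one hw]

lemma isIdempotentElem_pureState {w : EuclideanSpace ℂ (Fin d)} (hw : ‖w‖ = 1) :
    IsIdempotentElem (pureState w) := by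
  rw [IsIdempotentElem, pureState_eq_vecMulVec, vecMulVec_mul_vecMulVec,
    dotProduct_star_self_eq_one hw, one_smul]

lemma mul_pureState_mul_conjTranspose {e : ℕ} (K : Matrix (Fin e) (Fin d) ℂ)
    (w : EuclideanSpace ℂ (Fin d)) :
    K * pureState w * Kᴴ = vecMulVec (K *ᵥ w) (star (K *ᵥ w)) := by
  rw [pureState_eq_vecMulVec, mul_vecMulVec, vecMulVec_mul, star_mulVec]

lemma entropy_nonneg {ρ : Matrix (Fin d) (Fin d) ℂ} (hρ : ρ.PosSemidef) (htr : ρ.trace = 1) :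
    0 ≤ entropy ρ := by
  have hsum : ∑ i, hρ.1.eigenvalues i = 1 := by
    have h := hρ.1.trace_eq_sum_eigenvalues
    rw [htr, ← RCLike.ofReal_sum, ← RCLike.ofReal_one, RCLike.ofReal_inj] at h
    exact h.symm
  rw [entropy, dif_pos hρ.1, neg_nonneg]
  refine Finset.sum_nonpos fun i _ => mul_nonpos_of_nonneg_of_nonpos (hρ.eigenvalues_nonneg i)
    (Real.logb_nonpos one_lt_two (hρ.eigenvalues_nonneg i) ?_)
  exact hsum ▸ Finset.single_le_sum (fun j _ => hρ.eigenvalues_nonneg j) (Finset.mem_univ i)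

lemma entropy_eq_zero_of_isIdempotentElem {ρ : Matrix (Fin d) (Fin d) ℂ} (hρ : ρ.IsHermitian)
    (hidem : IsIdempotentElem ρ) : entropy ρ = 0 := by
  rw [entropy, dif_pos hρ, neg_eq_zero]
  refine Finset.sum_eq_zero fun i _ => ?_
  have h01 := hidem.spectrum_subset ℝ (hρ.eigenvalues_mem_spectrum_real i)
  rw [Set.mem_insert_iff, Set.mem_singleton_iff] at h01
  rcases h01 with h | h <;> simp [h]

lemma entropy_pureState {w : EuclideanSpace ℂ (Fin d)} (hw : ‖w‖ = 1) :
    entropy (pureState w) = 0 :=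
  entropy_eq_zero_of_isIdempotentElem (pureState_posSemidef w).1 (isIdempotentElem_pureState hw)

lemma Smin_eq_zero {e : ℕ} {Φ : Matrix (Fin d) (Fin d) ℂ → Matrix (Fin e) (Fin e) ℂ}
    (hnonneg : ∀ w : EuclideanSpace ℂ (Fin d), ‖w‖ = 1 → 0 ≤ entropy (Φ (pureState w)))
    (hzero : ∃ w : EuclideanSpace ℂ (Fin d), ‖w‖ = 1 ∧ entropy (Φ (pureState w)) = 0) :
    Smin Φ = 0 := by
  refine IsLeast.csInf_eq ⟨?_, ?_⟩
  · obtain ⟨w, hw, h0⟩ := hzero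
    exact ⟨w, hw, h0.symm⟩
  · rintro x ⟨w, hw, rfl⟩
    exact hnonneg w hw

end QuantumState

section KrausMap

variable {ι m n : Type*} [Fintype m] [Fintype n] {s : Finset ι}
  {K : ι → Matrix m n ℂ} {ρ : Matrix n n ℂ}

lemma posSemidef_sum_mul_mul_conjTranspose (hρ : ρ.PosSemidef) :
    (∑ j ∈ s, K j * ρ * (K j)ᴴ).PosSemidef :=
  posSemidef_sum s fun j _ => hρ.mul_mul_conjTranspose_same (K j)

lemma trace_sum_mul_mul_conjTranspose [DecidableEq n] (hK : ∑ j ∈ s, (K j)ᴴ * K j = 1) :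
    (∑ j ∈ s, K j * ρ * (K j)ᴴ).trace = ρ.trace := by
  simp_rw [trace_sum, trace_mul_cycle _ ρ, ← trace_sum, ← Finset.sum_mul, hK, one_mul]

end KrausMap

lemma eps_zero_eq {m n i j : ℕ} (hjn : j ≤ n) (hji : j ≤ i) (him : i ≤ m + j) :
    eps m n 0 i j = n.choose j * m.choose (i - j) /
      √((m + n).choose i * m.choose (i - j) * n.choose j) := by
  have hlo : max (0 : ℤ) (max ((j : ℤ) - i) (j + ((0 : ℕ) : ℤ) - n)) = 0 := by omega
  have hhi : min ((0 : ℕ) : ℤ) (min (j : ℤ) (j + m - i - ((0 : ℕ) : ℤ))) = 0 := by omega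
  have hij : (i : ℤ) - j = ((i - j : ℕ) : ℤ) := by omega
  rw [eps, hlo, hhi, Finset.Icc_self, Finset.sum_singleton, epsBeta]
  simp [hij, Cb]

lemma eps_zero_sq {m n i j : ℕ} (hjn : j ≤ n) (hji : j ≤ i) (him : i ≤ m + j) :
    eps m n 0 i j ^ 2 = n.choose j * m.choose (i - j) / (m + n).choose i := by
  have hn : (0 : ℝ) < n.choose j := by exact_mod_cast Nat.choose_pos hjn
  have hm : (0 : ℝ) < m.choose (i - j) := by exact_mod_cast Nat.choose_pos (by omega)
  have hmn : (0 : ℝ) < (m + n).choose i := by exact_mod_cast Nat.choose_pos (by omega)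
  rw [eps_zero_eq hjn hji him, div_pow, Real.sq_sqrt (by positivity)]
  field_simp

lemma eps_zero_zero_zero (m n : ℕ) : eps m n 0 0 0 = 1 := by
  simpa using eps_zero_eq (m := m) (Nat.zero_le n) (le_refl 0) (Nat.zero_le _)

lemma sum_choose_mul_choose_sub (m n i : ℕ) :
    ∑ j ∈ (Finset.range (n + 1)).filter (fun j => j ≤ i), n.choose j * m.choose (i - j) =
      (m + n).choose i := by
  rw [Nat.add_comm m n, Nat.add_choose_eq, Finset.Nat.sum_antidiagonal_eq_sum_range_succ_mk]
  refine Finset.sum_subset (fun j hj => ?_) (fun j hj hj' => ?_)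
  · simp only [Finset.mem_filter, Finset.mem_range] at hj ⊢
    omega
  · simp only [Finset.mem_filter, Finset.mem_range] at hj hj'
    simp [Nat.choose_eq_zero_of_lt (show n < j by omega)]

lemma sum_eps_zero_sq {m n i : ℕ} (hi : i ≤ m + n) :
    ∑ j ∈ Finset.range (n + 1),
      (if j ≤ i ∧ i ≤ m + j then eps m n 0 i j ^ 2 else 0) = 1 := by
  have hmn : ((m + n).choose i : ℝ) ≠ 0 := by exact_mod_cast (Nat.choose_pos hi).ne'
  calc ∑ j ∈ Finset.range (n + 1), (if j ≤ i ∧ i ≤ m + j then eps m n 0 i j ^ 2 else 0)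
      = ∑ j ∈ (Finset.range (n + 1)).filter (fun j => j ≤ i),
          (n.choose j * m.choose (i - j) : ℝ) / (m + n).choose i := by
        rw [Finset.sum_filter]
        refine Finset.sum_congr rfl fun j hj => ?_
        rw [Finset.mem_range] at hj
        by_cases hji : j ≤ i
        · by_cases him : i ≤ m + j
          · rw [if_pos ⟨hji, him⟩, if_pos hji, eps_zero_sq (by omega) hji him]
          · have hzero : m.choose (i - j) = 0 := Nat.choose_eq_zero_of_lt (by omega)
            rw [if_neg (by omega), if_pos hji, hzero]
            simp
        · rw [if_neg (by omega), if_neg hji]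
    _ = 1 := by
        rw [← Finset.sum_div, ← div_self hmn, ← sum_choose_mul_choose_sub m n i]
        push_cast
        rfl

lemma kraus_zero_apply (m n j : ℕ) (l : Fin (m + 1)) (i : Fin (m + n - 2 * 0 + 1)) :
    kraus m n 0 j l i = if (l : ℕ) + j = i then (eps m n 0 i j : ℂ) else 0 := by
  have hl := l.isLt
  have hi := i.isLt
  rw [kraus, of_apply]
  congr 1
  apply propext
  push_cast
  omega

lemma conjTranspose_kraus_zero_mul_self (m n j : ℕ) :
    (kraus m n 0 j)ᴴ * kraus m n 0 j = diagonal fun i : Fin (m + n - 2 * 0 + 1) =>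
      (((if j ≤ i ∧ (i : ℕ) ≤ m + j then eps m n 0 i j ^ 2 else 0 : ℝ)) : ℂ) := by
  ext i i'
  rw [mul_apply, diagonal_apply]
  simp only [conjTranspose_apply, kraus_zero_apply]
  by_cases hii : i = i'
  · subst hii
    rw [if_pos rfl]
    split_ifs with hji
    · rw [Finset.sum_eq_single ⟨i - j, by omega⟩]
      · simp [show i - j + j = (i : ℕ) by omega, sq]
      · intro l _ hl
        rw [if_neg fun h => hl (Fin.ext (by simp; omega))]
        simp
      · simp
    · refine Finset.sum_eq_zero fun l _ => ?_
      rw [if_neg (by omega)]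
      simp
  · rw [if_neg hii]
    refine Finset.sum_eq_zero fun l _ => ?_
    by_cases h : (l : ℕ) + j = i
    · rw [if_neg (show ¬(l : ℕ) + j = i' from fun h' => hii (Fin.ext (by omega)))]
      simp
    · simp [h]

lemma sum_conjTranspose_kraus_zero_mul_self (m n : ℕ) :
    ∑ j ∈ Finset.range (n + 1), (kraus m n 0 j)ᴴ * kraus m n 0 j = 1 := by
  ext i i'
  simp only [conjTranspose_kraus_zero_mul_self, Matrix.sum_apply, diagonal_apply, one_apply]
  by_cases h : i = i'
  · subst h
    simp only [if_true]
    rw [← Complex.ofReal_sum, sum_eps_zero_sq (by omega), Complex.ofReal_one]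
  · simp [h]

lemma kraus_zero_mulVec_single (m n j : ℕ) :
    kraus m n 0 j *ᵥ ⇑(EuclideanSpace.single (0 : Fin (m + n - 2 * 0 + 1)) (1 : ℂ)) =
      if j = 0 then ⇑(EuclideanSpace.single (0 : Fin (m + 1)) (1 : ℂ)) else 0 := by
  ext l
  rcases eq_or_ne j 0 with rfl | hj
  · simp [kraus_zero_apply, eps_zero_zero_zero]
  · simp [kraus_zero_apply, hj]

lemma eposic_zero_pureState_single (m n : ℕ) :
    eposic m n 0 (pureState (EuclideanSpace.single 0 1)) =
      pureState (EuclideanSpace.single (0 : Fin (m + 1)) 1) := by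
  rw [eposic, Finset.sum_eq_single 0]
  · rw [mul_pureState_mul_conjTranspose, kraus_zero_mulVec_single, if_pos rfl]
    rfl
  · intro j _ hj
    rw [mul_pureState_mul_conjTranspose, kraus_zero_mulVec_single, if_neg hj]
    simp
  · simp

theorem stmt2 (m n : ℕ) :
    eposic m n 0 (pureState (EuclideanSpace.single 0 1)) =
      pureState (EuclideanSpace.single (0 : Fin (m + 1)) 1) ∧
    Smin (eposic m n 0) = 0 := by
  refine ⟨eposic_zero_pureState_single m n,
    Smin_eq_zero (fun w hw => ?_) ⟨EuclideanSpace.single 0 1, by simp, ?_⟩⟩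
  · refine entropy_nonneg (posSemidef_sum_mul_mul_conjTranspose (pureState_posSemidef w)) ?_
    rw [eposic, trace_sum_mul_mul_conjTranspose (sum_conjTranspose_kraus_zero_mul_self m n),
      trace_pureState hw]
  · rw [eposic_zero_pureState_single, entropy_pureState (by simp)]
end

section
/- Let m, n, h ∈ ℕ with h ≤ min(m,n) and r = m+n−2h, and let ε_i^j = ε_i^j(m,n,h) be the EPOSIC coefficients. Then: (1) ε_i^0 ≠ 0 for all 0 ≤ i ≤ m−h; (2) ε_i^{i−m+h} ≠ 0 for all m−h ≤ i ≤ r; (3) ε_i^{i+h} ≠ 0 for all 0 ≤ i ≤ n−h; (4) ε_i^n ≠ 0 for all n−h ≤ i ≤ r. -/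
/-!
In each of the four boundary cases the summation range of `ε_i^j` collapses to a single index
`s` (`s = 0` in cases (1), (2) and `s = h` in cases (3), (4)), so `ε_i^j = β_{i,s,j}`. The
constraints that pin the range down to `s` are exactly the support conditions of the three
binomial coefficients in the numerator of `β_{i,s,j}`, and they also force `0 ≤ i ≤ r`, so all
the binomial coefficients in the denominator are positive as well.
-/

open scoped BigOperators Matrix
open Matrix

open Finset

lemma Cb_pos (a : ℕ) {b : ℤ} (hb₀ : 0 ≤ b) (hba : b ≤ a) : 0 < Cb a b := by
  rw [Cb, if_pos hb₀]
  exact_mod_cast Nat.choose_pos (by omega)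

lemma sum_choose_sq_div_choose_mul_choose_pos {m n h : ℕ} (hm : h ≤ m) (hn : h ≤ n) :
    0 < ∑ k ∈ range (h + 1),
        (h.choose k : ℝ) ^ 2 / ((m.choose (h - k) : ℝ) * (n.choose k : ℝ)) := by
  refine sum_pos (fun k hk => ?_) nonempty_range_add_one
  have hkh : k ≤ h := Nat.lt_succ_iff.mp (mem_range.mp hk)
  have : 0 < (h.choose k : ℝ) := by exact_mod_cast Nat.choose_pos hkh
  have : 0 < (m.choose (h - k) : ℝ) := by exact_mod_cast Nat.choose_pos (by omega)
  have : 0 < (n.choose k : ℝ) := by exact_mod_cast Nat.choose_pos (by omega)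
  positivity

lemma epsBeta_ne_zero {m n h : ℕ} (hm : h ≤ m) (hn : h ≤ n) {i s j : ℤ}
    (hs₀ : 0 ≤ s) (hsh : s ≤ h) (hjs₀ : 0 ≤ j - s) (hjs : j - s ≤ (n : ℤ) - h)
    (hijs₀ : 0 ≤ i - j + s) (hijs : i - j + s ≤ (m : ℤ) - h) :
    epsBeta m n h i s j ≠ 0 := by
  have hnum : (-1 : ℝ) ^ s * Cb h s * Cb (n - h) (j - s) * Cb (m - h) (i - j + s) ≠ 0 := by
    have := Cb_pos h hs₀ hsh
    have := Cb_pos (n - h) hjs₀ (by omega)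
    have := Cb_pos (m - h) hijs₀ (by omega)
    have : (-1 : ℝ) ^ s ≠ 0 := zpow_ne_zero s (by norm_num)
    positivity
  have hden : 0 < Cb (m + n - 2 * h) i * Cb m (i - j + h) * Cb n j *
      ∑ k ∈ range (h + 1),
        (h.choose k : ℝ) ^ 2 / ((m.choose (h - k) : ℝ) * (n.choose k : ℝ)) := by
    have := Cb_pos (m + n - 2 * h) (b := i) (by omega) (by omega)
    have := Cb_pos m (b := i - j + h) (by omega) (by omega)
    have := Cb_pos n (b := j) (by omega) (by omega)
    have := sum_choose_sq_div_choose_mul_choose_pos hm hn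
    positivity
  exact div_ne_zero hnum (Real.sqrt_pos.mpr hden).ne'

lemma eps_eq_epsBeta_of_range_eq {m n h : ℕ} {i j s : ℤ}
    (hlo : max 0 (max (j - i) (j + h - n)) = s) (hhi : min (h : ℤ) (min j (j + m - i - h)) = s) :
    eps m n h i j = epsBeta m n h i s j := by
  rw [eps, hlo, hhi, Icc_self, sum_singleton]

lemma eps_ne_zero_of_range_eq {m n h : ℕ} (hm : h ≤ m) (hn : h ≤ n) {i j s : ℤ}
    (hlo : max 0 (max (j - i) (j + h - n)) = s) (hhi : min (h : ℤ) (min j (j + m - i - h)) = s) :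
    eps m n h i j ≠ 0 := by
  rw [eps_eq_epsBeta_of_range_eq hlo hhi]
  exact epsBeta_ne_zero hm hn (by omega) (by omega) (by omega) (by omega) (by omega) (by omega)

theorem stmt3 (m n h : ℕ) (hh : h ≤ min m n) :
    (∀ i : ℤ, 0 ≤ i → i ≤ (m : ℤ) - h → eps m n h i 0 ≠ 0) ∧
    (∀ i : ℤ, (m : ℤ) - h ≤ i → i ≤ (m : ℤ) + n - 2 * h →
      eps m n h i (i - m + h) ≠ 0) ∧
    (∀ i : ℤ, 0 ≤ i → i ≤ (n : ℤ) - h → eps m n h i (i + h) ≠ 0) ∧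
    (∀ i : ℤ, (n : ℤ) - h ≤ i → i ≤ (m : ℤ) + n - 2 * h → eps m n h i n ≠ 0) := by
  have hm : h ≤ m := hh.trans (min_le_left m n)
  have hn : h ≤ n := hh.trans (min_le_right m n)
  refine ⟨fun i hi₀ hi₁ => ?_, fun i hi₀ hi₁ => ?_, fun i hi₀ hi₁ => ?_, fun i hi₀ hi₁ => ?_⟩
  · exact eps_ne_zero_of_range_eq hm hn (i := i) (j := 0) (s := 0) (by omega) (by omega)
  · exact eps_ne_zero_of_range_eq hm hn (i := i) (j := i - m + h) (s := 0) (by omega) (by omega)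
  · exact eps_ne_zero_of_range_eq hm hn (i := i) (j := i + h) (s := h) (by omega) (by omega)
  · exact eps_ne_zero_of_range_eq hm hn (i := i) (j := n) (s := h) (by omega) (by omega)
end

section
/- Let m ∈ ℕ with m ≥ 5 and let p ∈ [0,1]. For 0 ≤ j ≤ m set λ_j = 2(m−j+1)p/((m+1)(m+2)) + 2j(1−p)/(m(m+1)) (so the λ_j are nonnegative and sum to 1). Then −Σ_{j=0}^{m} λ_j log₂ λ_j ≥ (1/(4 ln 2)) · ((m−2)/(2m(m+1)))². -/
/-!
The Shannon entropy of a probability vector is at least its min-entropy `-log₂ (max_j λ_j)`.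
Each `λ_j` is a convex combination, with weights `p` and `1 - p`, of two numbers at most
`2 / (m + 1)`, so the entropy is at least `log₂ ((m + 1) / 2) ≥ 1` once `m ≥ 3`. The claimed
bound is far below that: it is at most `1 / (4 ln 2) < 1`.
-/

open Finset

theorem neg_logb_le_neg_sum_mul_logb {ι : Type*} (s : Finset ι) (w : ι → ℝ) {b c : ℝ}
    (hb : 1 < b) (hw₀ : ∀ i ∈ s, 0 ≤ w i) (hwc : ∀ i ∈ s, w i ≤ c) (hw₁ : ∑ i ∈ s, w i = 1) :
    -Real.logb b c ≤ -∑ i ∈ s, w i * Real.logb b (w i) := by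
  have hterm : ∀ i ∈ s, w i * Real.logb b (w i) ≤ w i * Real.logb b c := by
    intro i hi
    rcases (hw₀ i hi).eq_or_lt with hzero | hpos
    · simp [← hzero]
    · exact mul_le_mul_of_nonneg_left (Real.logb_le_logb_of_le hb hpos (hwc i hi)) hpos.le
  have hsum := sum_le_sum hterm
  rw [← sum_mul, hw₁, one_mul] at hsum
  linarith

theorem sum_range_succ_natCast (m : ℕ) : ∑ j ∈ range (m + 1), (j : ℝ) = m * (m + 1) / 2 := by
  induction m with
  | zero => simp
  | succ k ih => rw [sum_range_succ, ih]; push_cast; ring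

noncomputable def eposicWeight (m : ℕ) (p : ℝ) (j : ℕ) : ℝ :=
  2 * ((m : ℝ) - j + 1) * p / (((m : ℝ) + 1) * ((m : ℝ) + 2)) +
    2 * (j : ℝ) * (1 - p) / ((m : ℝ) * ((m : ℝ) + 1))

section eposicWeight

variable {m : ℕ} {p : ℝ} {j : ℕ}

theorem eposicWeight_eq_convex (m : ℕ) (p : ℝ) (j : ℕ) :
    eposicWeight m p j =
      p * (2 / ((m : ℝ) + 1) * (((m : ℝ) - j + 1) / ((m : ℝ) + 2))) +
        (1 - p) * (2 / ((m : ℝ) + 1) * ((j : ℝ) / m)) := by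
  simp only [eposicWeight, div_eq_mul_inv, mul_inv]
  ring

theorem eposicWeight_nonneg (hp : p ∈ Set.Icc (0 : ℝ) 1) (hj : j ≤ m) :
    0 ≤ eposicWeight m p j := by
  have hjm : (j : ℝ) ≤ m := by exact_mod_cast hj
  rw [eposicWeight_eq_convex]
  have hp₀ : 0 ≤ p := hp.1
  have hp₁ : 0 ≤ 1 - p := sub_nonneg.2 hp.2
  have hmj : 0 ≤ (m : ℝ) - j + 1 := by linarith
  positivity

theorem eposicWeight_le (hp : p ∈ Set.Icc (0 : ℝ) 1) (hj : j ≤ m) :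
    eposicWeight m p j ≤ 2 / ((m : ℝ) + 1) := by
  have hjm : (j : ℝ) ≤ m := by exact_mod_cast hj
  have hc : 0 ≤ 2 / ((m : ℝ) + 1) := by positivity
  have ha : ((m : ℝ) - j + 1) / ((m : ℝ) + 2) ≤ 1 :=
    div_le_one_of_le₀ (by linarith [j.cast_nonneg (α := ℝ)]) (by positivity)
  have hb : (j : ℝ) / m ≤ 1 := div_le_one_of_le₀ hjm m.cast_nonneg
  rw [eposicWeight_eq_convex]
  calc _ ≤ p * (2 / ((m : ℝ) + 1) * 1) + (1 - p) * (2 / ((m : ℝ) + 1) * 1) := by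
        gcongr
        · exact hp.1
        · exact sub_nonneg.2 hp.2
    _ = 2 / ((m : ℝ) + 1) := by ring

theorem sum_eposicWeight (hm : m ≠ 0) (p : ℝ) : ∑ j ∈ range (m + 1), eposicWeight m p j = 1 := by
  have hm' : (m : ℝ) ≠ 0 := by exact_mod_cast hm
  have haffine : ∀ j : ℕ, eposicWeight m p j =
      2 * p / ((m : ℝ) + 2) +
        (2 * (1 - p) / ((m : ℝ) * ((m : ℝ) + 1)) - 2 * p / (((m : ℝ) + 1) * ((m : ℝ) + 2))) * j := by
    intro j
    unfold eposicWeight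
    field_simp
    ring
  simp only [haffine, sum_add_distrib, sum_const, card_range, nsmul_eq_mul, ← mul_sum,
    sum_range_succ_natCast]
  field_simp
  push_cast
  ring

end eposicWeight

theorem one_div_four_log_two_mul_le_one {x : ℝ} (hx : x ≤ 1) : 1 / (4 * Real.log 2) * x ≤ 1 := by
  have hlog2 := Real.log_two_gt_d9
  rw [one_div_mul_eq_div, div_le_one (by linarith)]
  linarith

theorem stmt14 (m : ℕ) (hm : 5 ≤ m) (p : ℝ) (hp : p ∈ Set.Icc (0 : ℝ) 1) :
    1 / (4 * Real.log 2) * (((m : ℝ) - 2) / (2 * (m : ℝ) * ((m : ℝ) + 1))) ^ 2 ≤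
      -∑ j ∈ Finset.range (m + 1),
        (2 * ((m : ℝ) - j + 1) * p / (((m : ℝ) + 1) * ((m : ℝ) + 2)) +
            2 * (j : ℝ) * (1 - p) / ((m : ℝ) * ((m : ℝ) + 1))) *
          Real.logb 2
            (2 * ((m : ℝ) - j + 1) * p / (((m : ℝ) + 1) * ((m : ℝ) + 2)) +
              2 * (j : ℝ) * (1 - p) / ((m : ℝ) * ((m : ℝ) + 1))) := by
  have hm5 : (5 : ℝ) ≤ m := by exact_mod_cast hm
  have hentropy : Real.logb 2 (((m : ℝ) + 1) / 2) ≤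
      -∑ j ∈ range (m + 1), eposicWeight m p j * Real.logb 2 (eposicWeight m p j) := by
    rw [← inv_div, Real.logb_inv]
    refine neg_logb_le_neg_sum_mul_logb _ _ one_lt_two
      (fun j hj => eposicWeight_nonneg hp (Nat.lt_succ_iff.1 (mem_range.1 hj)))
      (fun j hj => eposicWeight_le hp (Nat.lt_succ_iff.1 (mem_range.1 hj)))
      (sum_eposicWeight (by omega) p)
  have hone : 1 ≤ Real.logb 2 (((m : ℝ) + 1) / 2) := by
    rw [Real.le_logb_iff_rpow_le one_lt_two (by positivity), Real.rpow_one]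
    linarith
  have hsq : (((m : ℝ) - 2) / (2 * m * (m + 1))) ^ 2 ≤ 1 :=
    pow_le_one₀ (div_nonneg (by linarith) (by positivity))
      (div_le_one_of_le₀ (by nlinarith) (by positivity))
  exact (one_div_four_log_two_mul_le_one hsq).trans (hone.trans hentropy)
end

section
/- Let d₁, d₂ be positive integers and let ρ be a positive semidefinite complex matrix indexed by (Fin d₁ × Fin d₂). Define the partial traces Tr₁ρ (a d₂×d₂ matrix with entries (Tr₁ρ)_{j,j'} = Σ_{i} ρ_{(i,j),(i,j')}) and Tr₂ρ (a d₁×d₁ matrix with entries (Tr₂ρ)_{i,i'} = Σ_{j} ρ_{(i,j),(i',j)}). If ρ is separable, then rank ρ ≥ rank(Tr₁ρ) and rank ρ ≥ rank(Tr₂ρ); equivalently, if rank ρ < max(rank(Tr₁ρ), rank(Tr₂ρ)) then ρ is not separable. -/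
open scoped BigOperators Matrix ComplexOrder Kronecker
open Matrix

/-- A positive semidefinite matrix indexed by a product system is separable if it is a
finite sum of Kronecker products of positive semidefinite matrices of the two factors. -/
def Separable {d₁ d₂ : ℕ} (ρ : Matrix (Fin d₁ × Fin d₂) (Fin d₁ × Fin d₂) ℂ) : Prop :=
  ∃ (t : ℕ) (σ : Fin t → Matrix (Fin d₁) (Fin d₁) ℂ)
    (τ : Fin t → Matrix (Fin d₂) (Fin d₂) ℂ),
    (∀ s, (σ s).PosSemidef) ∧ (∀ s, (τ s).PosSemidef) ∧ ρ = ∑ s, σ s ⊗ₖ τ s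

/-- The partial trace over the first factor. -/
noncomputable def ptrace1 {d₁ d₂ : ℕ}
    (ρ : Matrix (Fin d₁ × Fin d₂) (Fin d₁ × Fin d₂) ℂ) : Matrix (Fin d₂) (Fin d₂) ℂ :=
  Matrix.of fun j j' => ∑ i, ρ (i, j) (i, j')

/-- The partial trace over the second factor. -/
noncomputable def ptrace2 {d₁ d₂ : ℕ}
    (ρ : Matrix (Fin d₁ × Fin d₂) (Fin d₁ × Fin d₂) ℂ) : Matrix (Fin d₁) (Fin d₁) ℂ :=
  Matrix.of fun i i' => ∑ j, ρ (i, j) (i', j)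

/-!
Write `ρ = ∑ₛ σₛ ⊗ τₛ` and pick `w` with `τₛ w ≠ 0` for every `τₛ ≠ 0`; it exists because a
complex vector space is not a finite union of proper subspaces. Compressing `ρ` by `x ↦ x ⊗ w`
gives `∑ₛ ⟪w, τₛ w⟫ σₛ`, of rank at most `rank ρ`. The kernel of a sum of positive semidefinite
matrices is the intersection of their kernels, and `tr τₛ ≠ 0` forces `⟪w, τₛ w⟫ ≠ 0`, so this
compression kills only vectors killed by `Tr₂ ρ = ∑ₛ (tr τₛ) σₛ`. Swapping the two factors gives
the bound for `Tr₁ ρ`.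
-/

namespace Matrix

variable {𝕜 K ι l m n : Type*} [RCLike 𝕜] [Field K] [Fintype n]

theorem rank_le_rank_of_ker_mulVecLin_le {A : Matrix m n K} {B : Matrix l n K}
    (h : LinearMap.ker A.mulVecLin ≤ LinearMap.ker B.mulVecLin) : B.rank ≤ A.rank := by
  have hA := LinearMap.finrank_range_add_finrank_ker A.mulVecLin
  have hB := LinearMap.finrank_range_add_finrank_ker B.mulVecLin
  have := Submodule.finrank_mono h
  rw [rank, rank]
  omega

theorem exists_mulVec_eq_zero_imp_eq_zero [Infinite K] [Finite ι] (A : ι → Matrix m n K) :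
    ∃ w : n → K, ∀ s, A s *ᵥ w = 0 → A s = 0 := by
  by_contra! hcover
  obtain ⟨⟨s, hs⟩, hker⟩ := Subspace.exists_eq_top_of_iUnion_eq_univ
    (p := fun s : {s // A s ≠ 0} => LinearMap.ker (A s).mulVecLin) <| by
      refine Set.eq_univ_of_forall fun w => ?_
      obtain ⟨s, hsw, hs⟩ := hcover w
      exact Set.mem_iUnion.mpr ⟨⟨s, hs⟩, hsw⟩
  refine hs (ext_iff_mulVec.mpr fun v => ?_)
  simpa using hker.ge (Submodule.mem_top (x := v))

theorem PosSemidef.sum_mulVec_eq_zero_iff [Fintype ι] {M : ι → Matrix n n 𝕜}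
    (hM : ∀ s, (M s).PosSemidef) (x : n → 𝕜) : (∑ s, M s) *ᵥ x = 0 ↔ ∀ s, M s *ᵥ x = 0 := by
  simp_rw [← (posSemidef_sum _ fun s _ => hM s).dotProduct_mulVec_zero_iff,
    ← (hM _).dotProduct_mulVec_zero_iff, sum_mulVec, dotProduct_sum]
  simpa using Finset.sum_eq_zero_iff_of_nonneg (s := Finset.univ) fun s _ =>
    (hM s).dotProduct_mulVec_nonneg x

/-- The matrix of `x ↦ x ⊗ w`, i.e. `1 ⊗ₖ w` with its trivial column factor dropped. -/
def oneKroneckerCol {R n : Type*} (m : Type*) [DecidableEq m] [Zero R] (w : n → R) :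
    Matrix (m × n) m R :=
  of fun p i => if p.1 = i then w p.2 else 0

theorem conjTranspose_oneKroneckerCol_mul_kronecker_mul {R m : Type*} [Fintype m] [DecidableEq m]
    [CommSemiring R] [StarRing R] (σ : Matrix m m R) (τ : Matrix n n R) (w : n → R) :
    (oneKroneckerCol m w)ᴴ * (σ ⊗ₖ τ) * oneKroneckerCol m w = (star w ⬝ᵥ τ *ᵥ w) • σ := by
  ext i i'
  simp only [oneKroneckerCol, mul_apply, conjTranspose_apply, of_apply, apply_ite star, star_zero,
    kroneckerMap_apply, ite_mul, zero_mul, Fintype.sum_prod_type, Finset.sum_ite_irrel,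
    Finset.sum_const_zero, Finset.sum_ite_eq', Finset.mem_univ, ↓reduceIte, mul_ite,
    Finset.sum_mul, mul_zero, dotProduct, Pi.star_apply, mulVec, smul_apply, smul_eq_mul]
  rw [Finset.sum_comm]
  exact Finset.sum_congr rfl fun j _ => by
    rw [Finset.mul_sum, Finset.sum_mul]
    exact Finset.sum_congr rfl fun _ _ => by ring

theorem rank_sum_trace_smul_le_rank_sum_kronecker [Fintype ι] [Fintype m]
    {σ : ι → Matrix m m 𝕜} {τ : ι → Matrix n n 𝕜}
    (hσ : ∀ s, (σ s).PosSemidef) (hτ : ∀ s, (τ s).PosSemidef) :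
    (∑ s, (τ s).trace • σ s).rank ≤ (∑ s, σ s ⊗ₖ τ s).rank := by
  classical
  obtain ⟨w, hw⟩ := exists_mulVec_eq_zero_imp_eq_zero τ
  have hcompress : (oneKroneckerCol m w)ᴴ * (∑ s, σ s ⊗ₖ τ s) * oneKroneckerCol m w =
      ∑ s, (star w ⬝ᵥ τ s *ᵥ w) • σ s := by
    simp only [Matrix.mul_sum, Matrix.sum_mul, conjTranspose_oneKroneckerCol_mul_kronecker_mul]
  calc (∑ s, (τ s).trace • σ s).rank
      ≤ (∑ s, (star w ⬝ᵥ τ s *ᵥ w) • σ s).rank := by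
        refine rank_le_rank_of_ker_mulVecLin_le fun x hx => ?_
        simp only [LinearMap.mem_ker, mulVecLin_apply] at hx ⊢
        rw [PosSemidef.sum_mulVec_eq_zero_iff fun s => (hσ s).smul (hτ s).trace_nonneg]
        rw [PosSemidef.sum_mulVec_eq_zero_iff
          fun s => (hσ s).smul ((hτ s).dotProduct_mulVec_nonneg w)] at hx
        intro s
        have hs := hx s
        rw [smul_mulVec, smul_eq_zero] at hs ⊢
        refine hs.imp_left fun hτw => ?_
        rw [hw s (((hτ s).dotProduct_mulVec_zero_iff w).mp hτw), trace_zero]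
    _ ≤ (∑ s, σ s ⊗ₖ τ s).rank := by
        rw [← hcompress]
        exact (rank_mul_le_left _ _).trans (rank_mul_le_right _ _)

end Matrix

section PartialTrace

variable {d₁ d₂ : ℕ}

theorem ptrace2_sum_kronecker {ι : Type*} [Fintype ι] (σ : ι → Matrix (Fin d₁) (Fin d₁) ℂ)
    (τ : ι → Matrix (Fin d₂) (Fin d₂) ℂ) :
    ptrace2 (∑ s, σ s ⊗ₖ τ s) = ∑ s, (τ s).trace • σ s := by
  ext i i'
  simp only [ptrace2, of_apply, Matrix.sum_apply, kronecker_apply, Matrix.smul_apply,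
    smul_eq_mul, trace, diag, Finset.sum_mul]
  rw [Finset.sum_comm]
  exact Finset.sum_congr rfl fun s _ => Finset.sum_congr rfl fun j _ => mul_comm _ _

theorem ptrace1_eq_ptrace2_submatrix_prodComm
    (ρ : Matrix (Fin d₁ × Fin d₂) (Fin d₁ × Fin d₂) ℂ) :
    ptrace1 ρ = ptrace2 (ρ.submatrix (Equiv.prodComm _ _) (Equiv.prodComm _ _)) :=
  rfl

theorem Separable.submatrix_prodComm {ρ : Matrix (Fin d₁ × Fin d₂) (Fin d₁ × Fin d₂) ℂ}
    (hρ : Separable ρ) :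
    Separable (ρ.submatrix (Equiv.prodComm (Fin d₂) (Fin d₁)) (Equiv.prodComm _ _)) := by
  obtain ⟨t, σ, τ, hσ, hτ, rfl⟩ := hρ
  refine ⟨t, τ, σ, hτ, hσ, ?_⟩
  ext p q
  simp [Matrix.sum_apply, mul_comm]

theorem rank_ptrace2_le_of_separable {ρ : Matrix (Fin d₁ × Fin d₂) (Fin d₁ × Fin d₂) ℂ}
    (hρ : Separable ρ) : (ptrace2 ρ).rank ≤ ρ.rank := by
  obtain ⟨t, σ, τ, hσ, hτ, rfl⟩ := hρ
  rw [ptrace2_sum_kronecker]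
  exact rank_sum_trace_smul_le_rank_sum_kronecker hσ hτ

end PartialTrace

theorem stmt16_general (d₁ d₂ : ℕ)
    (ρ : Matrix (Fin d₁ × Fin d₂) (Fin d₁ × Fin d₂) ℂ)
    (hsep : Separable ρ) :
    (ptrace1 ρ).rank ≤ ρ.rank ∧ (ptrace2 ρ).rank ≤ ρ.rank := by
  refine ⟨?_, rank_ptrace2_le_of_separable hsep⟩
  rw [ptrace1_eq_ptrace2_submatrix_prodComm,
    ← rank_submatrix ρ (Equiv.prodComm _ _) (Equiv.prodComm _ _)]
  exact rank_ptrace2_le_of_separable hsep.submatrix_prodComm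

theorem stmt16 (d₁ d₂ : ℕ) (h₁ : 0 < d₁) (h₂ : 0 < d₂)
    (ρ : Matrix (Fin d₁ × Fin d₂) (Fin d₁ × Fin d₂) ℂ) (hρ : ρ.PosSemidef)
    (hsep : Separable ρ) :
    (ptrace1 ρ).rank ≤ ρ.rank ∧ (ptrace2 ρ).rank ≤ ρ.rank :=
  stmt16_general d₁ d₂ ρ hsep
end

section
/- Let d, e, k be positive integers with d ≥ e and k < d, let T_1, …, T_k be complex e×d matrices with Σ_{j=1}^{k} T_j* T_j = I_d, and let Φ(A) = Σ_{j=1}^{k} T_j A T_j* be the corresponding quantum channel. Then the Choi matrix C(Φ) = Σ_{i,j=0}^{d−1} Φ(E_{ij}) ⊗ E_{ij} is not separable; i.e. a quantum channel from d×d to e×e matrices with d ≥ e that can be written with fewer than d Kraus operators is not entanglement breaking. -/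
open scoped BigOperators Matrix ComplexOrder Kronecker
open Matrix

/-- The Choi matrix `C(Φ) = ∑_{i,j} Φ(E_{ij}) ⊗ E_{ij}` of a linear map between
matrix spaces, where `E_{ij}` are the standard matrix units. -/
noncomputable def choi {d e : ℕ}
    (Φ : Matrix (Fin d) (Fin d) ℂ → Matrix (Fin e) (Fin e) ℂ) :
    Matrix (Fin e × Fin d) (Fin e × Fin d) ℂ :=
  ∑ i : Fin d, ∑ j : Fin d, Φ (Matrix.single i j 1) ⊗ₖ Matrix.single i j 1

/-!
The Choi matrix of `Φ` is `∑ⱼ vec(Tⱼ) vec(Tⱼ)*`, so its rank is at most `k`, while tracing out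
the output factor leaves `(∑ⱼ Tⱼ* Tⱼ)ᵀ = 1`, of rank `d`. A separable `ρ` is a sum of rank-one
matrices `(xₚ ⊗ yₚ)(xₚ ⊗ yₚ)*`, so `rank ρ` is the dimension of the span of the `xₚ ⊗ yₚ`, and its
partial trace is `∑ₚ ‖xₚ‖² yₚ yₚ*`. Choosing among the `yₚ` with `xₚ ≠ 0` a basis of their span,
the corresponding product vectors stay linearly independent, so the rank of the partial trace is
at most `rank ρ`. Hence `d ≤ k`.
-/

namespace Matrix

variable {K R : Type*} {ι κ m m' n n' : Type*}

def kroneckerVec [Mul R] (x : m → R) (y : n → R) : m × n → R := fun u => x u.1 * y u.2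

@[simp]
lemma kroneckerVec_apply [Mul R] (x : m → R) (y : n → R) (a : m) (i : n) :
    kroneckerVec x y (a, i) = x a * y i := rfl

lemma star_kroneckerVec [CommMonoid R] [StarMul R] (x : m → R) (y : n → R) :
    star (kroneckerVec x y) = kroneckerVec (star x) (star y) := by
  ext u; simp [kroneckerVec]

lemma kroneckerVec_smul_right [CommMonoid R] (x : m → R) (c : R) (y : n → R) :
    kroneckerVec x (c • y) = c • kroneckerVec x y := by
  ext u; simp [kroneckerVec, mul_left_comm]

lemma vecMulVec_kronecker_vecMulVec [CommMonoid R] (x x' : m → R) (y y' : n → R) :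
    vecMulVec x x' ⊗ₖ vecMulVec y y' = vecMulVec (kroneckerVec x y) (kroneckerVec x' y') := by
  ext u v; simp [vecMulVec_apply, kroneckerVec, mul_mul_mul_comm]

lemma sum_kronecker_sum [Fintype ι] [Fintype κ] [CommSemiring R] (A : ι → Matrix m m' R)
    (B : κ → Matrix n n' R) : (∑ i, A i) ⊗ₖ (∑ j, B j) = ∑ i, ∑ j, A i ⊗ₖ B j := by
  ext u v
  simp [Matrix.sum_apply, Finset.sum_mul_sum]

lemma _root_.LinearIndependent.kroneckerVec [Field K] {x : ι → m → K} {y : ι → n → K}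
    (hy : LinearIndependent K y) (hx : ∀ i, x i ≠ 0) :
    LinearIndependent K fun i => kroneckerVec (x i) (y i) := by
  classical
  rw [linearIndependent_iff'] at hy ⊢
  intro s c hc i hi
  obtain ⟨a, ha⟩ := Function.ne_iff.mp (hx i)
  have hslice : ∑ j ∈ s, (c j * x j a) • y j = 0 := by
    ext k
    simpa [Finset.sum_apply, mul_assoc] using congrFun hc (a, k)
  exact (mul_eq_zero.mp (hy s _ hslice i hi)).resolve_right ha

lemma sum_vecMulVec_eq_transpose_mul [Fintype ι] [CommSemiring R] (u : ι → m → R)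
    (v : ι → n → R) : ∑ p, vecMulVec (u p) (v p) = (of u)ᵀ * of v := by
  ext i j; simp [sum_apply, mul_apply, vecMulVec_apply]

lemma rank_sum_vecMulVec_le [Fintype ι] [Fintype n] [Field K] (u : ι → m → K) (v : ι → n → K) :
    (∑ p, vecMulVec (u p) (v p)).rank ≤ Module.finrank K (Submodule.span K (Set.range u)) := by
  rw [sum_vecMulVec_eq_transpose_mul]
  exact (rank_mul_le_left _ _).trans_eq ((of u)ᵀ.rank_eq_finrank_span_cols)

lemma rank_sum_vecMulVec_star [Fintype ι] [Fintype m] [Field K] [PartialOrder K] [StarRing K]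
    [StarOrderedRing K] (w : ι → m → K) :
    (∑ p, vecMulVec (w p) (star (w p))).rank =
      Module.finrank K (Submodule.span K (Set.range w)) := by
  have : ∑ p, vecMulVec (w p) (star (w p)) = (of w)ᵀ * (of w)ᵀᴴ := by
    rw [sum_vecMulVec_eq_transpose_mul]; ext i j; simp [mul_apply]
  rw [this, rank_self_mul_conjTranspose, rank_eq_finrank_span_cols]
  rfl

lemma finrank_span_smul_le_finrank_span_kroneckerVec [Fintype m] [Fintype n] [Field K]
    (x : ι → m → K) (y : ι → n → K) (c : ι → K) (hc : ∀ i, x i = 0 → c i = 0) :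
    Module.finrank K (Submodule.span K (Set.range fun i => c i • y i)) ≤
      Module.finrank K (Submodule.span K (Set.range fun i => kroneckerVec (x i) (y i))) := by
  obtain ⟨κ, a, -, hspan, hli⟩ := exists_linearIndependent' K fun i => c i • y i
  have := hli.finite
  have := Fintype.ofFinite κ
  have hc0 (j : κ) : c (a j) ≠ 0 := fun h => hli.ne_zero j (by simp [h])
  have hli' : LinearIndependent K fun j => kroneckerVec (x (a j)) (c (a j) • y (a j)) :=
    hli.kroneckerVec fun j hx => hc0 j (hc _ hx)
  rw [← hspan, finrank_span_eq_card hli, ← finrank_span_eq_card hli']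
  refine Submodule.finrank_mono (Submodule.span_le.mpr ?_)
  rintro _ ⟨j, rfl⟩
  simp only [SetLike.mem_coe, kroneckerVec_smul_right]
  exact Submodule.smul_mem _ _ (Submodule.subset_span ⟨a j, rfl⟩)

section PartialTrace

variable [Fintype m] [CommSemiring R]

def partialTraceLeft : Matrix (m × n) (m × n) R →ₗ[R] Matrix n n R where
  toFun ρ := of fun i j => ∑ a, ρ (a, i) (a, j)
  map_add' ρ ρ' := by ext; simp [Finset.sum_add_distrib]
  map_smul' c ρ := by ext; simp [Finset.mul_sum]

lemma partialTraceLeft_apply (ρ : Matrix (m × n) (m × n) R) (i j : n) :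
    partialTraceLeft ρ i j = ∑ a, ρ (a, i) (a, j) := rfl

lemma partialTraceLeft_vecMulVec_kroneckerVec (x x' : m → R) (y y' : n → R) :
    partialTraceLeft (vecMulVec (kroneckerVec x y) (kroneckerVec x' y')) =
      vecMulVec ((x ⬝ᵥ x') • y) y' := by
  ext i j
  simp only [partialTraceLeft_apply, vecMulVec_apply, kroneckerVec_apply, Pi.smul_apply,
    smul_eq_mul, dotProduct, Finset.sum_mul]
  exact Finset.sum_congr rfl fun _ _ => by ring

end PartialTrace

end Matrix

open Matrix

lemma choi_apply {d e : ℕ} (Φ : Matrix (Fin d) (Fin d) ℂ → Matrix (Fin e) (Fin e) ℂ)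
    (a b : Fin e) (i j : Fin d) : choi Φ (a, i) (b, j) = Φ (single i j 1) a b := by
  simp only [choi, Matrix.sum_apply, kroneckerMap_apply, single_apply]
  simp [ite_and]

lemma choi_eq_sum_vecMulVec_of_kraus {d e k : ℕ} {T : Fin k → Matrix (Fin e) (Fin d) ℂ}
    {Φ : Matrix (Fin d) (Fin d) ℂ → Matrix (Fin e) (Fin e) ℂ}
    (hΦ : ∀ A, Φ A = ∑ j, T j * A * (T j)ᴴ) :
    choi Φ = ∑ j, vecMulVec (Function.uncurry (T j)) (star (Function.uncurry (T j))) := by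
  ext ⟨a, i⟩ ⟨b, j⟩
  simp only [choi_apply, hΦ, Matrix.sum_apply, vecMulVec_apply, mul_apply, single_apply]
  simp [ite_and, Function.uncurry]

lemma partialTraceLeft_choi_of_kraus {d e k : ℕ} {T : Fin k → Matrix (Fin e) (Fin d) ℂ}
    {Φ : Matrix (Fin d) (Fin d) ℂ → Matrix (Fin e) (Fin e) ℂ}
    (hΦ : ∀ A, Φ A = ∑ j, T j * A * (T j)ᴴ) :
    partialTraceLeft (choi Φ) = (∑ j, (T j)ᴴ * T j)ᵀ := by
  rw [choi_eq_sum_vecMulVec_of_kraus hΦ, map_sum, transpose_sum]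
  refine Finset.sum_congr rfl fun j _ => ?_
  ext i i'
  simp [partialTraceLeft_apply, vecMulVec_apply, mul_apply, mul_comm, Function.uncurry]

lemma rank_choi_le_of_kraus {d e k : ℕ} {T : Fin k → Matrix (Fin e) (Fin d) ℂ}
    {Φ : Matrix (Fin d) (Fin d) ℂ → Matrix (Fin e) (Fin e) ℂ}
    (hΦ : ∀ A, Φ A = ∑ j, T j * A * (T j)ᴴ) : (choi Φ).rank ≤ k := by
  rw [choi_eq_sum_vecMulVec_of_kraus hΦ]
  exact (rank_sum_vecMulVec_le _ _).trans
    ((finrank_range_le_card _).trans_eq (Fintype.card_fin k))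

lemma Separable.exists_eq_sum_vecMulVec_kroneckerVec {d₁ d₂ : ℕ}
    {ρ : Matrix (Fin d₁ × Fin d₂) (Fin d₁ × Fin d₂) ℂ} (hρ : Separable ρ) :
    ∃ (ι : Type) (_ : Fintype ι) (x : ι → Fin d₁ → ℂ) (y : ι → Fin d₂ → ℂ),
      ρ = ∑ p, vecMulVec (kroneckerVec (x p) (y p)) (star (kroneckerVec (x p) (y p))) := by
  obtain ⟨t, σ, τ, hσ, hτ, rfl⟩ := hρ
  choose mσ u hu using fun s => posSemidef_iff_eq_sum_vecMulVec.mp (hσ s)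
  choose mτ v hv using fun s => posSemidef_iff_eq_sum_vecMulVec.mp (hτ s)
  refine ⟨Σ s, Fin (mσ s) × Fin (mτ s), inferInstance, fun p => u p.1 p.2.1,
    fun p => v p.1 p.2.2, ?_⟩
  simp only [Fintype.sum_sigma, Fintype.sum_prod_type, star_kroneckerVec,
    ← vecMulVec_kronecker_vecMulVec]
  refine Finset.sum_congr rfl fun s _ => ?_
  rw [hu s, hv s, sum_kronecker_sum]

lemma Separable.rank_partialTraceLeft_le {d₁ d₂ : ℕ}
    {ρ : Matrix (Fin d₁ × Fin d₂) (Fin d₁ × Fin d₂) ℂ} (hρ : Separable ρ) :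
    (partialTraceLeft ρ).rank ≤ ρ.rank := by
  obtain ⟨ι, _, x, y, rfl⟩ := hρ.exists_eq_sum_vecMulVec_kroneckerVec
  rw [rank_sum_vecMulVec_star, map_sum]
  simp only [star_kroneckerVec, partialTraceLeft_vecMulVec_kroneckerVec]
  exact (rank_sum_vecMulVec_le _ _).trans
    (finrank_span_smul_le_finrank_span_kroneckerVec x y _ fun p hp => by simp [hp])

theorem stmt17_general (d e k : ℕ) (hkd : k < d)
    (T : Fin k → Matrix (Fin e) (Fin d) ℂ)
    (hT : ∑ j, (T j)ᴴ * T j = 1)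
    (Φ : Matrix (Fin d) (Fin d) ℂ → Matrix (Fin e) (Fin e) ℂ)
    (hΦ : ∀ A, Φ A = ∑ j, T j * A * (T j)ᴴ) :
    ¬ Separable (choi Φ) := by
  intro hsep
  have hd : d ≤ (choi Φ).rank := by
    simpa [partialTraceLeft_choi_of_kraus hΦ, hT] using hsep.rank_partialTraceLeft_le
  have hk := rank_choi_le_of_kraus hΦ
  omega

theorem stmt17 (d e k : ℕ) (hd : 0 < d) (he : 0 < e) (hk : 0 < k)
    (hed : e ≤ d) (hkd : k < d)
    (T : Fin k → Matrix (Fin e) (Fin d) ℂ)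
    (hT : ∑ j, (T j)ᴴ * T j = 1)
    (Φ : Matrix (Fin d) (Fin d) ℂ → Matrix (Fin e) (Fin e) ℂ)
    (hΦ : ∀ A, Φ A = ∑ j, T j * A * (T j)ᴴ) :
    ¬ Separable (choi Φ) :=
  stmt17_general d e k hkd T hT Φ hΦ
end
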